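/- arXiv:2509.17058 — 2 statements merged into one kernel-verified Lean document; each statement's English description precedes it below -/
import Mathlib

section
/- Optimal gain for zonotopic recursive least squares: Let P ∈ ℝ^{n×n} be symmetric positive semidefinite, φ ∈ ℝ^{p×n}, λ > 0, Q ∈ ℝ^{p×p} symmetric positive definite, and W ∈ ℝ^{n×n} symmetric positive definite. Define J(K) = Tr(λ^{-1} W (I - Kφ) P (I - Kφ)^T + W K Q K^T) for K ∈ ℝ^{n×p}. Then J is minimized at K* = P φ^T Λ^{-1}, where Λ = φ P φ^T + λQ, and the minimizer is independent of W. -/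
open Matrix

lemma myPosDef_smul {m : ℕ} {Q : Matrix (Fin m) (Fin m) ℝ} (hQ : Q.PosDef)
    {c : ℝ} (hc : 0 < c) : (c • Q).PosDef := by
  refine ⟨?_, fun x hx => ?_⟩
  · unfold Matrix.IsHermitian
    have h : Qᵀ = Q := by rw [← conjTranspose_eq_transpose_of_trivial]; exact hQ.1.eq
    simp [h]
  · simpa [Finsupp.mul_sum, mul_assoc, mul_left_comm] using smul_pos hc (hQ.2 hx)

lemma myTrace_nonneg {m : ℕ} {S : Matrix (Fin m) (Fin m) ℝ} (hS : S.PosSemidef) :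
    0 ≤ S.trace := by
  rw [Matrix.trace]
  apply Finset.sum_nonneg
  intro i _
  exact hS.diag_nonneg

lemma myTrace_mul_nonneg {m : ℕ} {W S : Matrix (Fin m) (Fin m) ℝ}
    (hW : W.PosSemidef) (hS : S.PosSemidef) : 0 ≤ (W * S).trace := by
  have hB' : ∃ B : Matrix (Fin m) (Fin m) ℝ, S = star B * B := by
    open scoped MatrixOrder Matrix.Norms.L2Operator in
    exact CStarAlgebra.nonneg_iff_eq_star_mul_self.mp hS.nonneg
  obtain ⟨B, hB⟩ := hB'
  rw [star_eq_conjTranspose] at hB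
  subst hB
  have : (W * (Bᴴ * B)).trace = (B * W * Bᴴ).trace := by
    rw [← Matrix.mul_assoc, Matrix.trace_mul_comm, ← Matrix.mul_assoc]
  rw [this]
  exact myTrace_nonneg (hW.mul_mul_conjTranspose_same B)

/-- Optimal gain for zonotopic recursive least squares: `K* = P φᵀ Λ⁻¹` minimizes
`J(K) = Tr(λ⁻¹ W (I - Kφ) P (I - Kφ)ᵀ + W K Q Kᵀ)` over `K`, for every weighting
matrix `W ≻ 0` (so the minimizer is independent of `W`). -/
theorem optimal_gain_ZRLS {n p : ℕ}
    (P : Matrix (Fin n) (Fin n) ℝ) (hP : P.PosSemidef)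
    (φ : Matrix (Fin p) (Fin n) ℝ)
    (lam : ℝ) (hlam : 0 < lam)
    (Q : Matrix (Fin p) (Fin p) ℝ) (hQ : Q.PosDef) :
    ∀ W : Matrix (Fin n) (Fin n) ℝ, W.PosDef →
      ∀ K : Matrix (Fin n) (Fin p) ℝ,
        (fun K' : Matrix (Fin n) (Fin p) ℝ =>
            Matrix.trace (lam⁻¹ • (W * (1 - K' * φ) * P * (1 - K' * φ)ᵀ) +
              W * K' * Q * K'ᵀ))
          (P * φᵀ * (φ * P * φᵀ + lam • Q)⁻¹) ≤
        (fun K' : Matrix (Fin n) (Fin p) ℝ =>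
            Matrix.trace (lam⁻¹ • (W * (1 - K' * φ) * P * (1 - K' * φ)ᵀ) +
              W * K' * Q * K'ᵀ))
          K := by
  intro W hW K
  simp only
  have hlam' : lam ≠ 0 := ne_of_gt hlam
  set Λ := φ * P * φᵀ + lam • Q with hΛdef
  have hΛ : Λ.PosDef := by
    have h1 : (φ * P * φᵀ).PosSemidef := by
      have := hP.mul_mul_conjTranspose_same φ
      simpa [conjTranspose_eq_transpose_of_trivial] using this
    exact Matrix.PosDef.posSemidef_add h1 (myPosDef_smul hQ hlam)
  have hdet : IsUnit Λ.det := isUnit_iff_ne_zero.mpr (ne_of_gt hΛ.det_pos)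
  have hΛsymm : Λᵀ = Λ := by
    rw [← conjTranspose_eq_transpose_of_trivial]; exact hΛ.1.eq
  have hPsymm : Pᵀ = P := by
    rw [← conjTranspose_eq_transpose_of_trivial]; exact hP.1.eq
  have hinv' : Λ⁻¹ * Λ = 1 := nonsing_inv_mul _ hdet
  have hinv : Λ * Λ⁻¹ = 1 := mul_nonsing_inv _ hdet
  have hinvT : Λ⁻¹ᵀ = Λ⁻¹ := by
    rw [transpose_nonsing_inv, hΛsymm]
  set K₀ := P * φᵀ * Λ⁻¹ with hK0
  have h1 : K₀ * Λ = P * φᵀ := by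
    rw [hK0, Matrix.mul_assoc, hinv', Matrix.mul_one]
  have h2 : Λ * K₀ᵀ = φ * P := by
    rw [hK0, transpose_mul, transpose_mul, hinvT, transpose_transpose, hPsymm,
      ← Matrix.mul_assoc, hinv, Matrix.one_mul]
  have key : ∀ K' : Matrix (Fin n) (Fin p) ℝ,
      lam⁻¹ • (W * (1 - K' * φ) * P * (1 - K' * φ)ᵀ) + W * K' * Q * K'ᵀ
      = lam⁻¹ • (W * P) - lam⁻¹ • (W * (K' * (φ * P))) - lam⁻¹ • (W * (P * (φᵀ * K'ᵀ)))
        + lam⁻¹ • (W * (K' * (Λ * K'ᵀ))) := by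
    intro K'
    rw [hΛdef]
    simp only [Matrix.mul_sub, Matrix.sub_mul, Matrix.mul_add, Matrix.add_mul,
      Matrix.mul_one, Matrix.one_mul, transpose_sub, transpose_mul, transpose_one,
      smul_sub, smul_add, Matrix.mul_smul, Matrix.smul_mul, smul_smul,
      inv_mul_cancel₀ hlam', one_smul, Matrix.mul_assoc]
    abel
  rw [key, key]
  have e1 : φ * P = Λ * K₀ᵀ := h2.symm
  have e2 : P * φᵀ = K₀ * Λ := by rw [← h1]
  have key2 : lam⁻¹ • (W * P) - lam⁻¹ • (W * (K * (φ * P))) - lam⁻¹ • (W * (P * (φᵀ * Kᵀ)))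
        + lam⁻¹ • (W * (K * (Λ * Kᵀ)))
      = (lam⁻¹ • (W * P) - lam⁻¹ • (W * (K₀ * (φ * P))) - lam⁻¹ • (W * (P * (φᵀ * K₀ᵀ)))
        + lam⁻¹ • (W * (K₀ * (Λ * K₀ᵀ))))
        + lam⁻¹ • (W * ((K - K₀) * (Λ * (K - K₀)ᵀ))) := by
    have e3 : P * (φᵀ * Kᵀ) = K₀ * (Λ * Kᵀ) := by
      rw [← Matrix.mul_assoc, ← Matrix.mul_assoc, e2]
    have e4 : P * (φᵀ * K₀ᵀ) = K₀ * (Λ * K₀ᵀ) := by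
      rw [← Matrix.mul_assoc, ← Matrix.mul_assoc, e2]
    rw [e1, e3, e4]
    simp only [Matrix.mul_sub, Matrix.sub_mul, transpose_sub, smul_sub, Matrix.mul_assoc]
    abel
  rw [key2]
  have hZ : 0 ≤ (lam⁻¹ • (W * ((K - K₀) * (Λ * (K - K₀)ᵀ)))).trace := by
    rw [Matrix.trace_smul]
    apply smul_nonneg (le_of_lt (by positivity))
    apply myTrace_mul_nonneg hW.posSemidef
    have := hΛ.posSemidef.mul_mul_conjTranspose_same (K - K₀)
    simpa [conjTranspose_eq_transpose_of_trivial, Matrix.mul_assoc] using this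
  simp only [Matrix.trace_add, Matrix.trace_sub]
  linarith [hZ]
end

section
/- Multi-step reachable set over-approximation for LTV systems with bounded model drift: Let x_{k+1} = A_k x_k + B_k u_k + w_k with [A_0, B_0] ∈ M_0 (a matrix zonotope) and [A_k, B_k] = [A_0, B_0] + Σ_{j=0}^{k-1} [δA_j, δB_j], where each perturbation satisfies ‖[δA_j, δB_j]‖_max ≤ σ. Then for every k, [A_k, B_k] ∈ M_0 ⊕ ⟨0, {kσ E_1, ..., kσ E_{n(n+m)}}⟩, where E_s are the standard basis matrices of ℝ^{n×(n+m)}, and consequently if x_k ∈ R_k, u_k ∈ U_k, w_k ∈ Z_w, then x_{k+1} ∈ (M_0 ⊕ ⟨0, {kσE_s}⟩)·(R_k × U_k) ⊕ Z_w. -/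
/-- A vector zonotope with state index `σ`. -/
def zonotope {σ ι : Type*} [Fintype ι] (c : σ → ℝ) (g : ι → σ → ℝ) :
    Set (σ → ℝ) :=
  {x | ∃ β : ι → ℝ, (∀ i, |β i| ≤ 1) ∧ x = c + ∑ i, β i • g i}

/-- A matrix zonotope over arbitrary index types. -/
def mzonotope {r s ι : Type*} [Fintype ι]
    (C : Matrix r s ℝ) (G : ι → Matrix r s ℝ) : Set (Matrix r s ℝ) :=
  {X | ∃ β : ι → ℝ, (∀ i, |β i| ≤ 1) ∧ X = C + ∑ i, β i • G i}

/-- Multi-step reachable set over-approximation for LTV systems with bounded model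
drift: the time-varying model `[A_k B_k]` stays in the Minkowski sum of the initial
model zonotope and the drift zonotope with generators `k σ E_s`, and consequently the
one-step successor of any `x ∈ R_k`, `u ∈ U_k`, `w ∈ Z_w` lies in the corresponding
over-approximating set. -/
theorem multi_step_reachability_LTV {n m γM γR γU γW : ℕ}
    (AB : ℕ → Matrix (Fin n) (Fin n ⊕ Fin m) ℝ)
    (C₀ : Matrix (Fin n) (Fin n ⊕ Fin m) ℝ)
    (G₀ : Fin γM → Matrix (Fin n) (Fin n ⊕ Fin m) ℝ)
    (σ : ℝ) (hσ : 0 ≤ σ)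
    (h0 : AB 0 ∈ mzonotope C₀ G₀)
    (hdrift : ∀ j, ∀ i : Fin n, ∀ l : Fin n ⊕ Fin m, |(AB (j + 1) - AB j) i l| ≤ σ)
    (k : ℕ) :
    AB k ∈ mzonotope C₀
        (Sum.elim G₀ (fun s : Fin n × (Fin n ⊕ Fin m) =>
          Matrix.single s.1 s.2 ((k : ℝ) * σ))) ∧
    ∀ (cR : Fin n → ℝ) (gR : Fin γR → Fin n → ℝ)
      (cU : Fin m → ℝ) (gU : Fin γU → Fin m → ℝ)
      (cW : Fin n → ℝ) (gW : Fin γW → Fin n → ℝ)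
      (x : Fin n → ℝ), x ∈ zonotope cR gR →
      ∀ u : Fin m → ℝ, u ∈ zonotope cU gU →
      ∀ w : Fin n → ℝ, w ∈ zonotope cW gW →
      (AB k).mulVec (Sum.elim x u) + w ∈
        {v | ∃ M' ∈ mzonotope C₀
                (Sum.elim G₀ (fun s : Fin n × (Fin n ⊕ Fin m) =>
                  Matrix.single s.1 s.2 ((k : ℝ) * σ))),
              ∃ z ∈ {z : Fin n ⊕ Fin m → ℝ |
                      ∃ r ∈ zonotope cR gR, ∃ u' ∈ zonotope cU gU, z = Sum.elim r u'},
              ∃ w' ∈ zonotope cW gW, v = M'.mulVec z + w'} := by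
  have hmem : AB k ∈ mzonotope C₀
      (Sum.elim G₀ (fun s : Fin n × (Fin n ⊕ Fin m) =>
        Matrix.single s.1 s.2 ((k : ℝ) * σ))) := by
    obtain ⟨β₀, hβ₀, hAB0⟩ := h0
    -- entrywise bound on the drift
    have hbound : ∀ i l, |(AB k - AB 0) i l| ≤ (k : ℝ) * σ := by
      intro i l
      induction k with
      | zero => simp
      | succ k ih =>
        have : (AB (k+1) - AB 0) i l = (AB (k+1) - AB k) i l + (AB k - AB 0) i l := by
          simp [Matrix.sub_apply]
        rw [this]
        calc |(AB (k+1) - AB k) i l + (AB k - AB 0) i l|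
            ≤ |(AB (k+1) - AB k) i l| + |(AB k - AB 0) i l| := abs_add_le _ _
          _ ≤ σ + (k : ℝ) * σ := add_le_add (hdrift k i l) ih
          _ = ((k + 1 : ℕ) : ℝ) * σ := by push_cast; ring
    set c : ℝ := (k : ℝ) * σ with hc
    set D := AB k - AB 0 with hD
    refine ⟨Sum.elim β₀ (fun s => if c = 0 then 0 else D s.1 s.2 / c), ?_, ?_⟩
    · intro i
      rcases i with i | s
      · exact hβ₀ i
      · simp only [Sum.elim_inr]
        split_ifs with h
        · simp
        · have hcpos : 0 < c := lt_of_le_of_ne (by positivity) (Ne.symm h)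
          rw [abs_div, abs_of_pos hcpos, div_le_one hcpos]
          exact hbound s.1 s.2
    · rw [Fintype.sum_sum_type]
      have hsum : (∑ s : Fin n × (Fin n ⊕ Fin m),
          (if c = 0 then 0 else D s.1 s.2 / c) •
            Matrix.single s.1 s.2 c) = D := by
        have : ∀ s : Fin n × (Fin n ⊕ Fin m),
            (if c = 0 then 0 else D s.1 s.2 / c) • Matrix.single s.1 s.2 c
              = Matrix.single s.1 s.2 (D s.1 s.2) := by
          intro s
          split_ifs with h
          · have hD0 : D s.1 s.2 = 0 := by
              have := hbound s.1 s.2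
              rw [h] at this
              exact abs_eq_zero.mp (le_antisymm this (abs_nonneg _))
            simp [hD0]
          · rw [Matrix.smul_single, smul_eq_mul, div_mul_cancel₀ _ h]
        rw [Finset.sum_congr rfl (fun s _ => this s)]
        rw [Fintype.sum_prod_type]
        exact (Matrix.matrix_eq_sum_single D).symm
      simp only [Sum.elim_inl, Sum.elim_inr]
      rw [hsum]
      rw [hD, hAB0]
      abel
  refine ⟨hmem, ?_⟩
  intro cR gR cU gU cW gW x hx u hu w hw
  exact ⟨AB k, hmem, Sum.elim x u, ⟨x, hx, u, hu, rfl⟩, w, hw, rfl⟩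
end
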